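/- Set dr := X₁ + X₂ + X₃, and let (𝒳₁,…,𝒳₈) := (I_{12}^{+}P₁^{+}, I_{12}^{+}P₁^{−}, I_{12}^{−}P₁^{+}, I_{12}^{−}P₁^{−}, I_{12}^{+}P₃^{+}, I_{12}^{+}P₃^{−}, I_{12}^{−}P₃^{+}, I_{12}^{−}P₃^{−}). Let λ₁,…,λ₈ ∈ ℝ satisfy λ₄ = λ₃, λ₅ = −(3λ₁ + λ₂)/4, λ₆ = −(λ₁ + 3λ₂)/4, λ₇ = (3/4)(λ₁ − λ₂) − λ₃, and λ₈ = −(3/4)(λ₁ − λ₂) − λ₃. Then (K+1)(dr · Σ_{A=1}^{8} λ_A 𝒳_A) = 0. -/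

import Mathlib

open scoped TensorProduct

noncomputable section

/-- The standard positive-definite quadratic form on `ℝ³`. -/
abbrev Q3 : QuadraticForm ℝ (Fin 3 → ℝ) :=
  QuadraticMap.weightedSumSquares ℝ (fun _ : Fin 3 => (1 : ℝ))

/-- The Clifford algebra of 3-dimensional Euclidean space. -/
abbrev Cl3 : Type := CliffordAlgebra Q3

/-- The tensor product of two copies of `Cl3`, as ℝ-algebras. -/
abbrev A3 : Type := Cl3 ⊗[ℝ] Cl3

/-- The generators `e₁, e₂, e₃` (indexed by `Fin 3`). -/
def e (l : Fin 3) : Cl3 := CliffordAlgebra.ι Q3 (Pi.single l 1)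

/-- `X_l := e_l ⊗ e_l`. -/
def X (l : Fin 3) : A3 := e l ⊗ₜ[ℝ] e l

/-- `w^i := (e_j e_k) ⊗ 1` for `(i,j,k)` a cyclic permutation of the indices. -/
def w (i : Fin 3) : A3 := (e (i + 1) * e (i + 2)) ⊗ₜ[ℝ] (1 : Cl3)

/-- The (ℝ-linear) operators `J_l(U) := (1/2)(w^l U − U w^l)`. -/
def J (l : Fin 3) (U : A3) : A3 := (1/2 : ℝ) • (w l * U - U * w l)

/-- Kähler's total angular momentum operator `K+1`. -/
def K1 (U : A3) : A3 := J 0 U * w 0 + J 1 U * w 1 + J 2 U * w 2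

/-- The idempotents `I_{ij}^ε := (1/2)(1 + ε X_i X_j)`. -/
def Iem (i j : Fin 3) (ε : ℝ) : A3 := (1/2 : ℝ) • ((1 : A3) + ε • (X i * X j))

/-- The idempotents `P_l^δ := (1/2)(1 + δ X_l)`. -/
def P (l : Fin 3) (δ : ℝ) : A3 := (1/2 : ℝ) • ((1 : A3) + δ • X l)

/-- The eight idempotents `𝒳₁,…,𝒳₈` of Table 1. -/
def XA : Fin 8 → A3 :=
  ![Iem 0 1 1 * P 0 1, Iem 0 1 1 * P 0 (-1),
    Iem 0 1 (-1) * P 0 1, Iem 0 1 (-1) * P 0 (-1),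
    Iem 0 1 1 * P 2 1, Iem 0 1 1 * P 2 (-1),
    Iem 0 1 (-1) * P 2 1, Iem 0 1 (-1) * P 2 (-1)]

/-! Under the constraints, `∑ λ_A 𝒳_A = ((λ₁ - λ₂)/4) (dr - 2 X₁X₂X₃)`. Since the `X_l` are
pairwise commuting involutions, `dr² = 3 + 2 ∑_{i<j} X_iX_j = 3 + 2 dr X₁X₂X₃`, so
`dr (dr - 2 X₁X₂X₃) = 3`. Hence `K+1` is applied to a real scalar, which commutes with every `w^l`
and is therefore annihilated by each `J_l`. -/

theorem QuadraticMap.weightedSumSquares_isOrtho_single {ι R : Type*} [Fintype ι] [DecidableEq ι]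
    [CommRing R] (w : ι → R) {i j : ι} (hij : i ≠ j) (a b : R) :
    (QuadraticMap.weightedSumSquares R w).IsOrtho (Pi.single i a) (Pi.single j b) := by
  rw [QuadraticMap.isOrtho_def]
  simp only [QuadraticMap.weightedSumSquares_apply, ← Finset.sum_add_distrib]
  refine Finset.sum_congr rfl fun k _ => ?_
  rcases eq_or_ne k i with rfl | hki
  · simp [hij]
  · simp [hki]

theorem add_add_mul_add_add_sub_two_mul_mul_mul {R : Type*} [Ring R] {a b c : R}
    (ha : a * a = 1) (hb : b * b = 1) (hc : c * c = 1)
    (hab : Commute a b) (hac : Commute a c) (hbc : Commute b c) :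
    (a + b + c) * (a + b + c - 2 * (a * b * c)) = 3 := by
  have hsquare : (a + b + c) * (a + b + c) = 3 + 2 * (a * b + a * c + b * c) := by
    simp only [mul_add, add_mul, ha, hb, hc, hab.symm.eq, hac.symm.eq, hbc.symm.eq, two_mul]
    rw [show (3 : R) = 1 + 1 + 1 by norm_num]
    abel
  have hcube : (a + b + c) * (a * b * c) = a * b + a * c + b * c := by
    simp only [add_mul, mul_assoc, ← mul_assoc a a, ha, one_mul, hab.symm.left_comm,
      ← mul_assoc b b, hb, hac.symm.left_comm, hbc.symm.left_comm, hc, mul_one]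
    abel
  rw [mul_sub, hsquare, (Commute.ofNat_right _ 2).left_comm, hcube, add_sub_cancel_right]

lemma e_mul_self (i : Fin 3) : e i * e i = 1 := by
  simp [e, CliffordAlgebra.ι_sq_scalar, QuadraticMap.weightedSumSquares_apply, Pi.single_apply]

lemma e_mul_e_of_ne {i j : Fin 3} (h : i ≠ j) : e i * e j = -(e j * e i) :=
  CliffordAlgebra.ι_mul_ι_comm_of_isOrtho
    (QuadraticMap.weightedSumSquares_isOrtho_single _ h 1 1)

lemma X_mul_self (i : Fin 3) : X i * X i = 1 := by
  rw [X, Algebra.TensorProduct.tmul_mul_tmul, e_mul_self, Algebra.TensorProduct.one_def]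

lemma X_commute (i j : Fin 3) : Commute (X i) (X j) := by
  rcases eq_or_ne i j with rfl | h
  · exact Commute.refl _
  · rw [Commute, SemiconjBy, X, X, Algebra.TensorProduct.tmul_mul_tmul,
      Algebra.TensorProduct.tmul_mul_tmul, e_mul_e_of_ne h, TensorProduct.neg_tmul,
      TensorProduct.tmul_neg, neg_neg]

lemma X_zero_mul_X_one_mul_X_zero : X 0 * X 1 * X 0 = X 1 := by
  rw [mul_assoc, (X_commute 1 0).eq, ← mul_assoc, X_mul_self, one_mul]

lemma Iem_mul_P (i j l : Fin 3) (ε δ : ℝ) :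
    Iem i j ε * P l δ =
      (1/4 : ℝ) • (1 + δ • X l + ε • (X i * X j) + (ε * δ) • (X i * X j * X l)) := by
  simp only [Iem, P, smul_mul_smul, add_mul, mul_add, one_mul, mul_one]
  module

lemma sum_smul_XA (lam : Fin 8 → ℝ)
    (h4 : lam 3 = lam 2)
    (h5 : lam 4 = -(3 * lam 0 + lam 1) / 4)
    (h6 : lam 5 = -(lam 0 + 3 * lam 1) / 4)
    (h7 : lam 6 = (3/4) * (lam 0 - lam 1) - lam 2)
    (h8 : lam 7 = -(3/4) * (lam 0 - lam 1) - lam 2) :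
    ∑ A : Fin 8, lam A • XA A =
      ((lam 0 - lam 1) / 4) • (X 0 + X 1 + X 2 - 2 * (X 0 * X 1 * X 2)) := by
  simp only [Fin.sum_univ_eight, XA, Matrix.cons_val, Iem_mul_P, X_zero_mul_X_one_mul_X_zero,
    h4, h5, h6, h7, h8, two_mul]
  module

lemma K1_eq_zero_of_commute {U : A3} (hU : ∀ l, Commute (w l) U) : K1 U = 0 := by
  simp only [K1, J, (hU _).eq, sub_self, smul_zero, zero_mul, add_zero]

/-- If `λ₄ = λ₃`, `λ₅ = −(3λ₁+λ₂)/4`, `λ₆ = −(λ₁+3λ₂)/4`,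
`λ₇ = (3/4)(λ₁−λ₂) − λ₃`, `λ₈ = −(3/4)(λ₁−λ₂) − λ₃`, then
`(K+1)(dr · Σ λ_A 𝒳_A) = 0`, where `dr := X₁ + X₂ + X₃`. -/
theorem stmt17 (lam : Fin 8 → ℝ)
    (h4 : lam 3 = lam 2)
    (h5 : lam 4 = -(3 * lam 0 + lam 1) / 4)
    (h6 : lam 5 = -(lam 0 + 3 * lam 1) / 4)
    (h7 : lam 6 = (3/4) * (lam 0 - lam 1) - lam 2)
    (h8 : lam 7 = -(3/4) * (lam 0 - lam 1) - lam 2) :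
    K1 ((X 0 + X 1 + X 2) * ∑ A : Fin 8, lam A • XA A) = 0 := by
  rw [sum_smul_XA lam h4 h5 h6 h7 h8, mul_smul_comm,
    add_add_mul_add_add_sub_two_mul_mul_mul (X_mul_self 0) (X_mul_self 1) (X_mul_self 2)
      (X_commute 0 1) (X_commute 0 2) (X_commute 1 2)]
  exact K1_eq_zero_of_commute fun _ => (Commute.ofNat_right _ 3).smul_right _
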